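/- arXiv:2511.21162 — 5 statements merged into one kernel-verified Lean document; each statement's English description precedes it below -/
import Mathlib

section
/- Let ρ ∈ (1,∞) and consider prices p ∈ R^2 with p1, p2 ≥ 0, p1 + p2 ≥ 1, and (p1,p2) ≠ (1/2,1/2). Then (2p1 - 1) p1^{1/(ρ-1)} + (2p2 - 1) p2^{1/(ρ-1)} > 0. Equivalently, 2 > (p1^{1/(ρ-1)} + p2^{1/(ρ-1)}) / (p1^{ρ/(ρ-1)} + p2^{ρ/(ρ-1)}). -/
/-!
With `t = 1/(ρ-1) > 0` the excess demand term splits as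
`(2a-1)a^t + (2b-1)b^t = (a-b)(a^t-b^t) + (a+b-1)(a^t+b^t)`.
Both summands are nonnegative because `x ↦ x^t` is monotone and `a+b ≥ 1`; the first is positive
when `a ≠ b`, the second when `a+b > 1`, and `a = b`, `a+b = 1` is the excluded point `(1/2,1/2)`.
The quotient bound is the same inequality, since `x^{ρ/(ρ-1)} = x · x^t`.
-/

namespace Real

variable {a b t : ℝ}

lemma sub_mul_rpow_sub_rpow_nonneg (ha : 0 ≤ a) (hb : 0 ≤ b) (ht : 0 ≤ t) :
    0 ≤ (a - b) * (a ^ t - b ^ t) := by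
  rcases le_total a b with hab | hab
  · exact mul_nonneg_of_nonpos_of_nonpos (sub_nonpos.2 hab)
      (sub_nonpos.2 (rpow_le_rpow ha hab ht))
  · exact mul_nonneg (sub_nonneg.2 hab) (sub_nonneg.2 (rpow_le_rpow hb hab ht))

lemma sub_mul_rpow_sub_rpow_pos (ha : 0 ≤ a) (hb : 0 ≤ b) (ht : 0 < t) (hab : a ≠ b) :
    0 < (a - b) * (a ^ t - b ^ t) := by
  rcases hab.lt_or_gt with hab | hab
  · exact mul_pos_of_neg_of_neg (sub_neg.2 hab) (sub_neg.2 (rpow_lt_rpow ha hab ht))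
  · exact mul_pos (sub_pos.2 hab) (sub_pos.2 (rpow_lt_rpow hb hab ht))

lemma rpow_add_rpow_pos (ha : 0 ≤ a) (hb : 0 ≤ b) (hab : 0 < a + b) (t : ℝ) :
    0 < a ^ t + b ^ t := by
  rcases ha.lt_or_eq with ha | rfl
  · exact add_pos_of_pos_of_nonneg (rpow_pos_of_pos ha t) (rpow_nonneg hb t)
  · exact add_pos_of_nonneg_of_pos (rpow_nonneg le_rfl t) (rpow_pos_of_pos (by simpa using hab) t)

lemma two_mul_sub_one_mul_rpow_add_pos (ha : 0 ≤ a) (hb : 0 ≤ b) (ht : 0 < t)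
    (hsum : 1 ≤ a + b) (hne : ¬ (a = 1/2 ∧ b = 1/2)) :
    0 < (2*a - 1) * a ^ t + (2*b - 1) * b ^ t := by
  have hsplit : (2*a - 1) * a ^ t + (2*b - 1) * b ^ t =
      (a - b) * (a ^ t - b ^ t) + (a + b - 1) * (a ^ t + b ^ t) := by ring
  rw [hsplit]
  rcases hsum.lt_or_eq with hgt | heq
  · exact add_pos_of_nonneg_of_pos (sub_mul_rpow_sub_rpow_nonneg ha hb ht.le)
      (mul_pos (by linarith) (rpow_add_rpow_pos ha hb (by linarith) t))
  · have hab : a ≠ b := by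
      rintro rfl
      exact hne ⟨by linarith, by linarith⟩
    rw [← heq, sub_self, zero_mul, add_zero]
    exact sub_mul_rpow_sub_rpow_pos ha hb ht hab

end Real

/-- For `ρ ∈ (1,∞)` and prices `p1, p2 ≥ 0` with `p1 + p2 ≥ 1` and
`(p1,p2) ≠ (1/2,1/2)`, we have `(2p1-1)p1^{1/(ρ-1)} + (2p2-1)p2^{1/(ρ-1)} > 0`,
equivalently `(p1^{1/(ρ-1)} + p2^{1/(ρ-1)})/(p1^{ρ/(ρ-1)} + p2^{ρ/(ρ-1)}) < 2`. -/
theorem ces_price_sum_increases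
    (ρ p1 p2 : ℝ) (hρ : 1 < ρ)
    (hp1 : 0 ≤ p1) (hp2 : 0 ≤ p2) (hsum : 1 ≤ p1 + p2)
    (hne : ¬ (p1 = 1/2 ∧ p2 = 1/2)) :
    0 < (2*p1 - 1) * p1 ^ (1/(ρ-1)) + (2*p2 - 1) * p2 ^ (1/(ρ-1)) ∧
    (p1 ^ (1/(ρ-1)) + p2 ^ (1/(ρ-1))) / (p1 ^ (ρ/(ρ-1)) + p2 ^ (ρ/(ρ-1))) < 2 := by
  set t := 1/(ρ-1) with ht_def
  have ht : 0 < t := one_div_pos.2 (sub_pos.2 hρ)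
  have hexcess := Real.two_mul_sub_one_mul_rpow_add_pos hp1 hp2 ht hsum hne
  have hpow : ∀ x : ℝ, 0 ≤ x → x ^ (ρ/(ρ-1)) = x * x ^ t := fun x hx => by
    have hexp : ρ/(ρ-1) = 1 + t := by
      rw [ht_def]; field_simp [(sub_pos.2 hρ).ne']; ring
    rw [hexp, Real.rpow_one_add' hx (by linarith)]
  have hS : 0 ≤ p1 ^ t + p2 ^ t := add_nonneg (Real.rpow_nonneg hp1 t) (Real.rpow_nonneg hp2 t)
  refine ⟨hexcess, ?_⟩
  rw [hpow p1 hp1, hpow p2 hp2, div_lt_iff₀ (by linarith)]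
  linarith
end

section
/- In a chores Fisher market with CCH strictly increasing disutilities, any absolutely continuous trajectory p(t) of the relative tâtonnement dynamics dp/dt ∈ -Z̃(p) with initial point p(0) ∈ Δ_B = H_B ∩ R^m_+ satisfies p(t) ∈ Δ_B for all t ≥ 0. In particular, Σ_j p_j(t) = ‖B‖_1 for all t, and no coordinate ever becomes negative. -/
open Finset

/-- Agent demand: disutility-minimizing bundles subject to earning at least `Bi`. -/
def demandSet (m : ℕ) (d : (Fin m → ℝ) → ℝ) (Bi : ℝ) (p : Fin m → ℝ) :
    Set (Fin m → ℝ) :=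
  {x | (∀ j, 0 ≤ x j) ∧ Bi ≤ ∑ j, p j * x j ∧
    ∀ y : Fin m → ℝ, (∀ j, 0 ≤ y j) → Bi ≤ ∑ j, p j * y j → d x ≤ d y}

/-- Excess demand correspondence `Z(p) = { Σ_i x_i - 1_m : x_i ∈ X_i(p) }`. -/
def excessDemand (n m : ℕ) (d : Fin n → (Fin m → ℝ) → ℝ) (B : Fin n → ℝ)
    (p : Fin m → ℝ) : Set (Fin m → ℝ) :=
  {z | ∃ x : Fin n → Fin m → ℝ, (∀ i, x i ∈ demandSet m (d i) (B i) p) ∧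
    z = fun j => (∑ i, x i j) - 1}

/-- Relative excess demand `Z̃(p) = { z - (1/m)(Σ_j z_j)·1_m : z ∈ Z(p) }`. -/
def relExcessDemand (n m : ℕ) (d : Fin n → (Fin m → ℝ) → ℝ) (B : Fin n → ℝ)
    (p : Fin m → ℝ) : Set (Fin m → ℝ) :=
  {zt | ∃ z ∈ excessDemand n m d B p, zt = fun j => z j - (∑ j', z j') / m}

/-!
The velocity `-z̃` sums to zero, so `Σ_j P_j` is constant along the trajectory. At a price
`p_j ≤ 0` a strictly increasing disutility makes every agent drop chore `j`, so `z_j = -1` is the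
smallest coordinate of `z` and `z̃_j ≤ 0`: while `P_j` is negative it cannot decrease, and since it
starts nonnegative it never becomes negative.
-/

section Market

variable {n m : ℕ}

lemma apply_eq_zero_of_mem_demandSet {d : (Fin m → ℝ) → ℝ} {Bi : ℝ} {p x : Fin m → ℝ}
    (hmono : ∀ y z : Fin m → ℝ, (∀ j, 0 ≤ y j) → (∀ j, y j ≤ z j) → y ≠ z → d y < d z)
    (hx : x ∈ demandSet m d Bi p) {j : Fin m} (hpj : p j ≤ 0) : x j = 0 := by
  obtain ⟨hx_nonneg, hx_budget, hx_min⟩ := hx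
  by_contra hxj
  -- dropping chore `j` loses no earnings but strictly lowers the disutility
  set y := Function.update x j 0
  have hy_le : ∀ k, y k ≤ x k := by
    intro k
    rcases eq_or_ne k j with rfl | hk
    · simpa [y] using hx_nonneg k
    · simp [y, hk]
  have hy_nonneg : ∀ k, 0 ≤ y k := by
    intro k
    rcases eq_or_ne k j with rfl | hk
    · simp [y]
    · simpa [y, hk] using hx_nonneg k
  have hy_budget : Bi ≤ ∑ k, p k * y k := by
    refine hx_budget.trans (Finset.sum_le_sum fun k _ => ?_)
    rcases eq_or_ne k j with rfl | hk
    · simpa [y] using mul_nonpos_of_nonpos_of_nonneg hpj (hx_nonneg k)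
    · simp [y, hk]
  have hy_ne : y ≠ x := fun h => hxj (by simpa [y] using (congrFun h j).symm)
  exact (hx_min y hy_nonneg hy_budget).not_gt (hmono y x hy_nonneg hy_le hy_ne)

variable {d : Fin n → (Fin m → ℝ) → ℝ} {B : Fin n → ℝ} {p : Fin m → ℝ}

lemma neg_one_le_of_mem_excessDemand {z : Fin m → ℝ} (hz : z ∈ excessDemand n m d B p)
    (k : Fin m) : -1 ≤ z k := by
  obtain ⟨x, hx, rfl⟩ := hz
  simpa using Finset.sum_nonneg fun i _ => (hx i).1 k

lemma eq_neg_one_of_mem_excessDemand {z : Fin m → ℝ}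
    (hmono : ∀ i (x y : Fin m → ℝ), (∀ j, 0 ≤ x j) → (∀ j, x j ≤ y j) → x ≠ y →
      d i x < d i y)
    (hz : z ∈ excessDemand n m d B p) {j : Fin m} (hpj : p j ≤ 0) : z j = -1 := by
  obtain ⟨x, hx, rfl⟩ := hz
  simp [fun i => apply_eq_zero_of_mem_demandSet (hmono i) (hx i) hpj]

lemma sum_sub_mean_eq_zero (z : Fin m → ℝ) : ∑ j, (z j - (∑ k, z k) / m) = 0 := by
  rcases Nat.eq_zero_or_pos m with rfl | hm
  · simp
  · rw [Finset.sum_sub_distrib, Finset.sum_const, Finset.card_univ, Fintype.card_fin,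
      nsmul_eq_mul]
    field_simp
    ring

lemma sum_eq_zero_of_mem_relExcessDemand {zt : Fin m → ℝ}
    (hzt : zt ∈ relExcessDemand n m d B p) : ∑ j, zt j = 0 := by
  obtain ⟨z, -, rfl⟩ := hzt
  exact sum_sub_mean_eq_zero z

lemma nonpos_of_mem_relExcessDemand {zt : Fin m → ℝ}
    (hmono : ∀ i (x y : Fin m → ℝ), (∀ j, 0 ≤ x j) → (∀ j, x j ≤ y j) → x ≠ y →
      d i x < d i y)
    (hzt : zt ∈ relExcessDemand n m d B p) {j : Fin m} (hpj : p j ≤ 0) : zt j ≤ 0 := by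
  obtain ⟨z, hz, rfl⟩ := hzt
  have hm : (0 : ℝ) < m := by exact_mod_cast j.pos
  have hsum : -(m : ℝ) ≤ ∑ k, z k := by
    simpa using Finset.card_nsmul_le_sum univ z (-1) fun k _ =>
      neg_one_le_of_mem_excessDemand hz k
  have hmean : -1 ≤ (∑ k, z k) / m := by rwa [le_div_iff₀ hm, neg_one_mul]
  show z j - (∑ k, z k) / m ≤ 0
  linarith [eq_neg_one_of_mem_excessDemand hmono hz hpj]

end Market

section Trajectory

open MeasureTheory

variable {f g : ℝ → ℝ}

lemma intervalIntegrable_of_locallyIntegrableOn_Ici (hg : LocallyIntegrableOn g (Set.Ici 0))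
    {a b : ℝ} (ha : 0 ≤ a) (hb : 0 ≤ b) : IntervalIntegrable g volume a b :=
  (hg.integrableOn_compact_subset (fun _ hs => (le_inf ha hb).trans hs.1)
    isCompact_uIcc).intervalIntegrable

lemma continuousOn_Icc_of_eq_add_integral (hg : LocallyIntegrableOn g (Set.Ici 0))
    (hf : ∀ t, 0 ≤ t → f t = f 0 + ∫ s in 0..t, g s) {T : ℝ} (hT : 0 ≤ T) :
    ContinuousOn f (Set.Icc 0 T) := by
  have hprim := intervalIntegral.continuousOn_primitive_interval (a := 0) (b := T)
    (hg.integrableOn_compact_subset (fun _ hs => (le_inf le_rfl hT).trans hs.1) isCompact_uIcc)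
  rw [Set.uIcc_of_le hT] at hprim
  exact (continuousOn_const.add hprim).congr fun t ht => hf t ht.1

theorem nonneg_of_eq_add_integral (hg : LocallyIntegrableOn g (Set.Ici 0))
    (hf : ∀ t, 0 ≤ t → f t = f 0 + ∫ s in 0..t, g s) (hf0 : 0 ≤ f 0)
    (hg_nonneg : ∀ᵐ s ∂volume.restrict (Set.Ici 0), f s < 0 → 0 ≤ g s)
    {T : ℝ} (hT : 0 ≤ T) : 0 ≤ f T := by
  by_contra! hfT
  have hclosed : IsClosed (Set.Icc 0 T ∩ f ⁻¹' Set.Ici 0) :=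
    (continuousOn_Icc_of_eq_add_integral hg hf hT).preimage_isClosed_of_isClosed
      isClosed_Icc isClosed_Ici
  obtain ⟨t₀, ⟨⟨ht₀, ht₀T⟩, hft₀⟩, ht₀_max⟩ :=
    (isCompact_Icc.of_isClosed_subset hclosed Set.inter_subset_left).exists_isGreatest
      ⟨0, ⟨le_rfl, hT⟩, hf0⟩
  have hneg : ∀ s ∈ Set.Ioc t₀ T, f s < 0 := fun s hs => by
    by_contra! hfs
    exact hs.1.not_ge (ht₀_max ⟨⟨ht₀.trans hs.1.le, hs.2⟩, hfs⟩)
  have hincr : f T - f t₀ = ∫ s in t₀..T, g s := by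
    rw [hf T hT, hf t₀ ht₀, add_sub_add_left_eq_sub,
      intervalIntegral.integral_interval_sub_left
        (intervalIntegrable_of_locallyIntegrableOn_Ici hg le_rfl hT)
        (intervalIntegrable_of_locallyIntegrableOn_Ici hg le_rfl ht₀)]
  have hint : 0 ≤ ∫ s in t₀..T, g s := by
    rw [intervalIntegral.integral_of_le ht₀T]
    refine setIntegral_nonneg_of_ae_restrict ?_
    filter_upwards [ae_restrict_mem measurableSet_Ioc,
      ae_restrict_of_ae_restrict_of_subset (fun s hs => ht₀.trans hs.1.le) hg_nonneg]
      with s hs hgs using hgs (hneg s hs)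
  linarith [show 0 ≤ f t₀ from hft₀]

theorem sum_eq_of_eq_add_integral {ι : Type*} [Fintype ι] {P v : ℝ → ι → ℝ}
    (hv : ∀ j, LocallyIntegrableOn (fun s => v s j) (Set.Ici 0))
    (hP : ∀ j, ∀ t, 0 ≤ t → P t j = P 0 j + ∫ s in 0..t, v s j)
    (hsum : ∀ᵐ s ∂volume.restrict (Set.Ici 0), ∑ j, v s j = 0) {T : ℝ} (hT : 0 ≤ T) :
    ∑ j, P T j = ∑ j, P 0 j := by
  have hint : ∫ s in 0..T, ∑ j, v s j = 0 := by
    rw [intervalIntegral.integral_of_le hT]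
    exact integral_eq_zero_of_ae
      (ae_restrict_of_ae_restrict_of_subset (fun _ hs => hs.1.le) hsum)
  rw [intervalIntegral.integral_finsetSum
    fun j _ => intervalIntegrable_of_locallyIntegrableOn_Ici (hv j) le_rfl hT] at hint
  rw [Finset.sum_congr rfl fun j _ => hP j T hT, Finset.sum_add_distrib, hint, add_zero]

end Trajectory

open MeasureTheory in
theorem relative_tatonnement_stays_in_simplex_general
    (n m : ℕ)
    (B : Fin n → ℝ)
    (d : Fin n → (Fin m → ℝ) → ℝ)
    (hmono : ∀ i (x y : Fin m → ℝ), (∀ j, 0 ≤ x j) → (∀ j, x j ≤ y j) → x ≠ y →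
      d i x < d i y)
    (P v : ℝ → Fin m → ℝ)
    (hvint : ∀ j, LocallyIntegrableOn (fun s => v s j) (Set.Ici (0:ℝ)))
    (habs : ∀ j, ∀ t : ℝ, 0 ≤ t → P t j = P 0 j + ∫ s in (0:ℝ)..t, v s j)
    (hincl : ∀ᵐ t ∂(volume.restrict (Set.Ici (0:ℝ))),
      (fun j => -(v t j)) ∈ relExcessDemand n m d B (P t))
    (hp0nonneg : ∀ j, 0 ≤ P 0 j) (hp0sum : (∑ j, P 0 j) = ∑ i, B i) :
    ∀ t : ℝ, 0 ≤ t → (∀ j, 0 ≤ P t j) ∧ (∑ j, P t j) = ∑ i, B i := by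
  have hvel : ∀ᵐ t ∂(volume.restrict (Set.Ici (0:ℝ))),
      (∑ j, v t j = 0) ∧ ∀ j, P t j ≤ 0 → 0 ≤ v t j := by
    filter_upwards [hincl] with t ht
    refine ⟨?_, fun j hj => neg_nonpos.1 (nonpos_of_mem_relExcessDemand hmono ht hj)⟩
    simpa using sum_eq_zero_of_mem_relExcessDemand ht
  intro t ht
  refine ⟨fun j => nonneg_of_eq_add_integral (hvint j) (habs j) (hp0nonneg j) ?_ ht, ?_⟩
  · filter_upwards [hvel] with s hs hneg using hs.2 j hneg.le
  · rw [sum_eq_of_eq_add_integral hvint habs (hvel.mono fun _ h => h.1) ht, hp0sum]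

open MeasureTheory in
/-- In a chores Fisher market with CCH, strictly increasing disutilities,
any absolutely continuous trajectory `P(t)` of the relative tâtonnement dynamics
`dP/dt ∈ -Z̃(P)` starting from `P(0) ∈ Δ_B = H_B ∩ ℝ^m₊` stays in `Δ_B` for all `t ≥ 0`:
all coordinates remain nonnegative and `Σ_j P_j(t) = ‖B‖₁`. -/
theorem relative_tatonnement_stays_in_simplex
    (n m : ℕ) (hn : 0 < n) (hm : 0 < m)
    (B : Fin n → ℝ) (hB : ∀ i, 0 < B i)
    (d : Fin n → (Fin m → ℝ) → ℝ)
    (hcont : ∀ i, Continuous (d i))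
    (hconv : ∀ i, ConvexOn ℝ {x : Fin m → ℝ | ∀ j, 0 ≤ x j} (d i))
    (hhom : ∀ i (c : ℝ), 0 < c → ∀ x : Fin m → ℝ, d i (c • x) = c * d i x)
    (hmono : ∀ i (x y : Fin m → ℝ), (∀ j, 0 ≤ x j) → (∀ j, x j ≤ y j) → x ≠ y →
      d i x < d i y)
    (P v : ℝ → Fin m → ℝ)
    (hvint : ∀ j, LocallyIntegrableOn (fun s => v s j) (Set.Ici (0:ℝ)))
    (habs : ∀ j, ∀ t : ℝ, 0 ≤ t → P t j = P 0 j + ∫ s in (0:ℝ)..t, v s j)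
    (hincl : ∀ᵐ t ∂(volume.restrict (Set.Ici (0:ℝ))),
      (fun j => -(v t j)) ∈ relExcessDemand n m d B (P t))
    (hp0nonneg : ∀ j, 0 ≤ P 0 j) (hp0sum : (∑ j, P 0 j) = ∑ i, B i) :
    ∀ t : ℝ, 0 ≤ t → (∀ j, 0 ≤ P t j) ∧ (∑ j, P t j) = ∑ i, B i :=
  relative_tatonnement_stays_in_simplex_general n m B d hmono P v hvint habs hincl hp0nonneg hp0sum
end

section
/- Let d(x) = (Σ_{j=1}^m d_j x_j^ρ)^{1/ρ} with d_j > 0 and ρ ∈ (1,2]. Then the squared disutility d(x)^2 = (Σ_j d_j x_j^ρ)^{2/ρ} is μ-strongly convex on the cube C = { x ∈ R^m_+ : ‖x‖_∞ ≤ R } with μ = 2(ρ-1)(min_j d_j)^{2/ρ}, where R = (min_j d_j)^{-1/ρ}. Moreover ‖∇(d(x)^2)‖ ≤ 2(Σ_j d_j^{2/ρ})^{1/2} for all x with d(x) ≤ 1. -/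
/-!
Along a segment `u(t) = x + t (y - x)` of the nonnegative orthant put `s(t) = ∑ⱼ dⱼ uⱼ(t)^ρ`. Then
`(s^(2/ρ))'' = (2/ρ) s^(2/ρ-1) s'' + (2/ρ) (2/ρ-1) s^(2/ρ-2) s'²`, whose second term is nonnegative
as `ρ ≤ 2`, and `(2/ρ) s^(2/ρ-1) s'' = 2 (ρ-1) ∑ⱼ (yⱼ - xⱼ)² s^(2/ρ-1) dⱼ uⱼ^(ρ-2)`. The identity
`d u^(ρ-k) = d^(k/ρ) (d u^ρ)^(1-k/ρ)` with `k = 2`, together with `dⱼ uⱼ^ρ ≤ s`, gives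
`s^(2/ρ-1) dⱼ uⱼ^(ρ-2) ≥ dⱼ^(2/ρ) ≥ (min d)^(2/ρ)`, so strong convexity holds on the whole orthant.
With `k = 1` and `s ≤ 1` the same identity bounds the gradient coordinate `2 s^(2/ρ-1) dⱼ xⱼ^(ρ-1)`
by `2 dⱼ^(1/ρ)`; at the origin the function is `O(‖x‖²)`, so its gradient vanishes there.
-/

open Finset Real

theorem StrongConvexOn.subset {E : Type*} [NormedAddCommGroup E] [NormedSpace ℝ E]
    {s t : Set E} {μ : ℝ} {f : E → ℝ} (hf : StrongConvexOn t μ f) (hst : s ⊆ t)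
    (hs : Convex ℝ s) : StrongConvexOn s μ f :=
  ⟨hs, fun _ hx _ hy => hf.2 (hst hx) (hst hy)⟩

theorem strongConvexOn_of_segment {E : Type*} [NormedAddCommGroup E] [NormedSpace ℝ E]
    {s : Set E} {μ : ℝ} {f : E → ℝ} (hs : Convex ℝ s)
    (h : ∀ x ∈ s, ∀ y ∈ s, x ≠ y →
      StrongConvexOn (Set.Icc 0 1) (μ * ‖y - x‖ ^ 2) fun t : ℝ => f (x + t • (y - x))) :
    StrongConvexOn s μ f := by
  refine ⟨hs, fun x hx y hy a b ha hb hab => ?_⟩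
  obtain rfl | hxy := eq_or_ne x y
  · simp [← add_smul, hab, ← add_mul]
  have hseg := (h x hx y hy hxy).2 (Set.left_mem_Icc.2 zero_le_one)
    (Set.right_mem_Icc.2 zero_le_one) ha hb hab
  have hpt : x + (a • (0 : ℝ) + b • (1 : ℝ)) • (y - x) = a • x + b • y := by
    rw [eq_sub_of_add_eq' hab]; module
  have hunit : ‖(0 : ℝ) - 1‖ = 1 := by norm_num
  simp only [hpt, zero_smul, add_zero, one_smul, add_sub_cancel, hunit, norm_sub_rev y x]
    at hseg
  linarith

theorem strongConvexOn_of_hasDerivAt2_ge {D : Set ℝ} (hD : Convex ℝ D) {κ : ℝ}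
    {g g' g'' : ℝ → ℝ} (hg : ContinuousOn g D) (hg' : ∀ t ∈ interior D, HasDerivAt g (g' t) t)
    (hg'' : ∀ t ∈ interior D, HasDerivAt g' (g'' t) t) (hκ : ∀ t ∈ interior D, κ ≤ g'' t) :
    StrongConvexOn D κ g := by
  rw [strongConvexOn_iff_convex]
  simp only [Real.norm_eq_abs, sq_abs]
  refine convexOn_of_hasDerivWithinAt2_nonneg hD (f' := fun t => g' t - κ * t)
    (f'' := fun t => g'' t - κ) (hg.sub (by fun_prop)) (fun t ht => ?_) (fun t ht => ?_)
    (fun t ht => sub_nonneg.2 (hκ t ht))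
  · exact (((hg' t ht).fun_sub ((hasDerivAt_pow 2 t).const_mul (κ / 2))).congr_deriv
      (by norm_num; ring)).hasDerivWithinAt
  · exact (((hg'' t ht).fun_sub ((hasDerivAt_id t).const_mul κ)).congr_deriv
      (by simp)).hasDerivWithinAt

theorem HasDerivAt.hasDerivAt_rpow_const_deriv {s s' : ℝ → ℝ} {t s'' p : ℝ}
    (hs : HasDerivAt s (s' t) t) (hs' : HasDerivAt s' s'' t) (ht : s t ≠ 0) :
    HasDerivAt (fun τ => s' τ * p * s τ ^ (p - 1))
      (s'' * p * s t ^ (p - 1) + s' t ^ 2 * p * (p - 1) * s t ^ (p - 2)) t := by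
  refine ((hs'.mul_const p).mul (hs.rpow_const (p := p - 1) (Or.inl ht))).congr_deriv ?_
  rw [show p - 1 - 1 = p - 2 by ring]
  ring

theorem strongConvexOn_rpow_of_hasDerivAt2 {D : Set ℝ} (hD : Convex ℝ D) {p κ : ℝ}
    (hp : 1 ≤ p) {s s' s'' : ℝ → ℝ} (hs : ContinuousOn s D)
    (hpos : ∀ t ∈ interior D, 0 < s t) (hs' : ∀ t ∈ interior D, HasDerivAt s (s' t) t)
    (hs'' : ∀ t ∈ interior D, HasDerivAt s' (s'' t) t)
    (hκ : ∀ t ∈ interior D, κ ≤ s'' t * p * s t ^ (p - 1)) :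
    StrongConvexOn D κ fun t => s t ^ p := by
  refine strongConvexOn_of_hasDerivAt2_ge hD
    (hs.rpow_const fun t _ => Or.inr (by linarith))
    (fun t ht => (hs' t ht).rpow_const (Or.inl (hpos t ht).ne'))
    (fun t ht => (hs' t ht).hasDerivAt_rpow_const_deriv (hs'' t ht) (hpos t ht).ne')
    fun t ht => ?_
  have hst := hpos t ht
  have hp1 : 0 ≤ p - 1 := by linarith
  have hsq : 0 ≤ s' t ^ 2 * p * (p - 1) * s t ^ (p - 2) := by positivity
  linarith [hκ t ht]

theorem hasDerivAt_affine_rpow {a v ρ : ℝ} (hρ : 1 ≤ ρ) (t : ℝ) :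
    HasDerivAt (fun t => (a + t * v) ^ ρ) (v * ρ * (a + t * v) ^ (ρ - 1)) t := by
  simpa using (((hasDerivAt_id t).mul_const v).const_add a).rpow_const (Or.inr hρ)

theorem hasDerivAt_affine_rpow_deriv {a v ρ t : ℝ} (h : v ≠ 0 → 0 < a + t * v) :
    HasDerivAt (fun t => v * ρ * (a + t * v) ^ (ρ - 1))
      (v ^ 2 * ρ * (ρ - 1) * (a + t * v) ^ (ρ - 2)) t := by
  obtain rfl | hv := eq_or_ne v 0
  · simpa using hasDerivAt_const t (0 : ℝ)
  refine (((((hasDerivAt_id t).mul_const v).const_add a).rpow_const (p := ρ - 1)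
    (Or.inl (h hv).ne')).const_mul (v * ρ)).congr_deriv ?_
  simp only [id, show ρ - 1 - 1 = ρ - 2 by ring]
  ring

theorem add_mul_sub_pos {a b t : ℝ} (ha : 0 ≤ a) (hb : 0 ≤ b) (hab : b - a ≠ 0)
    (ht : t ∈ Set.Ioo 0 1) : 0 < a + t * (b - a) := by
  obtain ⟨ht₀, ht₁⟩ := ht
  rcases ha.lt_or_eq with ha | rfl
  · nlinarith [mul_nonneg ht₀.le hb]
  · rw [sub_zero] at hab ⊢
    simpa using mul_pos ht₀ (hb.lt_of_ne' hab)

theorem mul_rpow_sub_eq {d u ρ : ℝ} (hd : 0 < d) (hu : 0 ≤ u) (hρ : ρ ≠ 0) (k : ℝ) :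
    d * u ^ (ρ - k) = d ^ (k / ρ) * (d * u ^ ρ) ^ (1 - k / ρ) := by
  rw [mul_rpow hd.le (rpow_nonneg hu ρ), ← rpow_mul hu, ← mul_assoc, ← rpow_add hd,
    add_sub_cancel, rpow_one, mul_one_sub, mul_div_cancel₀ k hρ]

theorem rpow_two_div_le_rpow_two_div_sub_one_mul {d u ρ S : ℝ} (hρ : 0 < ρ) (hρ2 : ρ ≤ 2)
    (hd : 0 < d) (hu : 0 < u) (hS : d * u ^ ρ ≤ S) :
    d ^ (2 / ρ) ≤ S ^ (2 / ρ - 1) * (d * u ^ (ρ - 2)) := by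
  have hw : 0 < d * u ^ ρ := by positivity
  have hq : 0 ≤ 2 / ρ - 1 := by rw [sub_nonneg, le_div_iff₀ hρ]; linarith
  calc d ^ (2 / ρ) = d ^ (2 / ρ) * ((d * u ^ ρ) ^ (2 / ρ - 1) * (d * u ^ ρ) ^ (1 - 2 / ρ)) := by
        rw [← rpow_add hw]; norm_num
    _ ≤ d ^ (2 / ρ) * (S ^ (2 / ρ - 1) * (d * u ^ ρ) ^ (1 - 2 / ρ)) := by
        gcongr
    _ = S ^ (2 / ρ - 1) * (d * u ^ (ρ - 2)) := by
        rw [mul_rpow_sub_eq hd hu.le hρ.ne']; ring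

theorem rpow_two_div_sub_one_mul_le_rpow_one_div {d u ρ S : ℝ} (hρ : 1 ≤ ρ) (hd : 0 < d)
    (hu : 0 ≤ u) (hS : d * u ^ ρ ≤ S) (hS1 : S ^ (1 / ρ) ≤ 1) :
    S ^ (2 / ρ - 1) * (d * u ^ (ρ - 1)) ≤ d ^ (1 / ρ) := by
  have hρ0 : 0 < ρ := by linarith
  have hS0 : 0 ≤ S := le_trans (by positivity) hS
  have hq : 0 ≤ 1 - 1 / ρ := by rw [sub_nonneg, div_le_one hρ0]; exact hρ
  calc S ^ (2 / ρ - 1) * (d * u ^ (ρ - 1))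
      = d ^ (1 / ρ) * (S ^ (2 / ρ - 1) * (d * u ^ ρ) ^ (1 - 1 / ρ)) := by
        rw [mul_rpow_sub_eq hd hu hρ0.ne']; ring
    _ ≤ d ^ (1 / ρ) * (S ^ (2 / ρ - 1) * S ^ (1 - 1 / ρ)) := by gcongr
    _ = d ^ (1 / ρ) * S ^ (1 / ρ) := by
        rw [← rpow_add' hS0 (by ring_nf; positivity)]; ring_nf
    _ ≤ d ^ (1 / ρ) := mul_le_of_le_one_right (by positivity) hS1

section Orthant

variable {ι : Type*} [Fintype ι]

theorem sum_mul_rpow_pos {ρ : ℝ} {d u : ι → ℝ} (hd : ∀ j, 0 < d j) (hu : ∀ j, 0 ≤ u j) {j : ι}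
    (hj : 0 < u j) : 0 < ∑ i, d i * u i ^ ρ :=
  sum_pos' (fun i _ => mul_nonneg (hd i).le (rpow_nonneg (hu i) ρ))
    ⟨j, mem_univ j, mul_pos (hd j) (rpow_pos_of_pos hj ρ)⟩

theorem mul_sum_sq_le_sum_mul_rpow_sub_two {ρ c : ℝ} {d u V : ι → ℝ} (hρ1 : 1 ≤ ρ)
    (hρ2 : ρ ≤ 2) (hd : ∀ j, 0 < d j) (hc0 : 0 ≤ c) (hc : ∀ j, c ≤ d j) (hu : ∀ j, 0 ≤ u j)
    (hV : ∀ j, V j ≠ 0 → 0 < u j) :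
    2 * (ρ - 1) * c ^ (2 / ρ) * ∑ j, V j ^ 2 ≤
      (∑ j, d j * (V j ^ 2 * ρ * (ρ - 1) * u j ^ (ρ - 2))) * (2 / ρ) *
        (∑ j, d j * u j ^ ρ) ^ (2 / ρ - 1) := by
  have hρ : 0 < ρ := by linarith
  rw [mul_sum, sum_mul, sum_mul]
  refine sum_le_sum fun j _ => ?_
  obtain hVj | hVj := eq_or_ne (V j) 0
  · simp [hVj]
  have hdu : d j * u j ^ ρ ≤ ∑ i, d i * u i ^ ρ :=
    single_le_sum (f := fun i => d i * u i ^ ρ)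
      (fun i _ => mul_nonneg (hd i).le (rpow_nonneg (hu i) ρ)) (mem_univ j)
  have hcd : c ^ (2 / ρ) ≤ d j ^ (2 / ρ) := rpow_le_rpow hc0 (hc j) (by positivity)
  have hkey := hcd.trans (rpow_two_div_le_rpow_two_div_sub_one_mul hρ hρ2 (hd j) (hV j hVj) hdu)
  have hcoef : 0 ≤ 2 * (ρ - 1) * V j ^ 2 :=
    mul_nonneg (mul_nonneg two_pos.le (sub_nonneg.2 hρ1)) (sq_nonneg _)
  calc 2 * (ρ - 1) * c ^ (2 / ρ) * V j ^ 2
      = 2 * (ρ - 1) * V j ^ 2 * c ^ (2 / ρ) := mul_right_comm _ _ _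
    _ ≤ 2 * (ρ - 1) * V j ^ 2 * ((∑ i, d i * u i ^ ρ) ^ (2 / ρ - 1) * (d j * u j ^ (ρ - 2))) :=
        mul_le_mul_of_nonneg_left hkey hcoef
    _ = _ := by field_simp

theorem strongConvexOn_Icc_ces_sq_segment {ρ c : ℝ} {d X Y : ι → ℝ} (hρ1 : 1 ≤ ρ)
    (hρ2 : ρ ≤ 2) (hd : ∀ j, 0 < d j) (hc0 : 0 ≤ c) (hc : ∀ j, c ≤ d j) (hX : ∀ j, 0 ≤ X j)
    (hY : ∀ j, 0 ≤ Y j) (hXY : X ≠ Y) :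
    StrongConvexOn (Set.Icc 0 1) (2 * (ρ - 1) * c ^ (2 / ρ) * ∑ j, (Y j - X j) ^ 2)
      fun t => (∑ j, d j * (X j + t * (Y j - X j)) ^ ρ) ^ (2 / ρ) := by
  have hρ : 0 < ρ := by linarith
  obtain ⟨j₀, hj₀⟩ : ∃ j, Y j - X j ≠ 0 := by
    by_contra! h
    exact hXY (funext fun j => by linarith [h j])
  have hu₀ : ∀ t ∈ Set.Icc (0 : ℝ) 1, ∀ j, 0 ≤ X j + t * (Y j - X j) := fun t ht j =>
    (convex_Ici (0 : ℝ)).add_smul_sub_mem (hX j) (hY j) ht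
  have hu : ∀ t ∈ Set.Ioo (0 : ℝ) 1, ∀ j, Y j - X j ≠ 0 → 0 < X j + t * (Y j - X j) :=
    fun t ht j hj => add_mul_sub_pos (hX j) (hY j) hj ht
  rw [← interior_Icc] at hu
  have hs' : ∀ t, HasDerivAt (fun t => ∑ j, d j * (X j + t * (Y j - X j)) ^ ρ)
      (∑ j, d j * ((Y j - X j) * ρ * (X j + t * (Y j - X j)) ^ (ρ - 1))) t := fun t =>
    HasDerivAt.fun_sum fun j _ => (hasDerivAt_affine_rpow hρ1 t).const_mul (d j)
  refine strongConvexOn_rpow_of_hasDerivAt2 (convex_Icc 0 1) (by rw [le_div_iff₀ hρ]; linarith)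
    (continuous_iff_continuousAt.2 fun t => (hs' t).continuousAt).continuousOn
    (fun t ht => sum_mul_rpow_pos hd (hu₀ t (interior_subset ht)) (hu t ht j₀ hj₀))
    (fun t _ => hs' t)
    (fun t ht => HasDerivAt.fun_sum fun j _ =>
      (hasDerivAt_affine_rpow_deriv (hu t ht j)).const_mul (d j))
    fun t ht => mul_sum_sq_le_sum_mul_rpow_sub_two hρ1 hρ2 hd hc0 hc
      (hu₀ t (interior_subset ht)) (hu t ht)

theorem strongConvexOn_ces_sq {ρ c : ℝ} {d : ι → ℝ} (hρ1 : 1 ≤ ρ) (hρ2 : ρ ≤ 2)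
    (hd : ∀ j, 0 < d j) (hc0 : 0 ≤ c) (hc : ∀ j, c ≤ d j) :
    StrongConvexOn {x : EuclideanSpace ℝ ι | ∀ j, 0 ≤ x j} (2 * (ρ - 1) * c ^ (2 / ρ))
      fun x => (∑ j, d j * x j ^ ρ) ^ (2 / ρ) := by
  refine strongConvexOn_of_segment
    ((convex_Ici 0).linear_preimage (WithLp.linearEquiv 2 ℝ (ι → ℝ)).toLinearMap)
    fun x hx y hy hxy => ?_
  have hXY : x.ofLp ≠ y.ofLp := fun h => hxy (WithLp.ofLp_injective 2 h)
  convert strongConvexOn_Icc_ces_sq_segment hρ1 hρ2 hd hc0 hc hx hy hXY using 1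
  · simp [EuclideanSpace.norm_sq_eq, mul_assoc]
  · simp

theorem hasGradientAt_ces_sq {ρ : ℝ} (hρ : 1 ≤ ρ) (d : ι → ℝ) {x : EuclideanSpace ℝ ι}
    (hS : 0 < ∑ j, d j * x j ^ ρ) :
    HasGradientAt (fun y : EuclideanSpace ℝ ι => (∑ j, d j * y j ^ ρ) ^ (2 / ρ))
      (WithLp.toLp 2 fun j => 2 * (∑ i, d i * x i ^ ρ) ^ (2 / ρ - 1) * (d j * x j ^ (ρ - 1)))
      x := by
  have hsum : HasFDerivAt (fun y : EuclideanSpace ℝ ι => ∑ j, d j * y j ^ ρ)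
      (∑ j, d j • ((ρ * x j ^ (ρ - 1)) • EuclideanSpace.proj j)) x :=
    HasFDerivAt.fun_sum fun j _ =>
      ((EuclideanSpace.proj j).hasFDerivAt.rpow_const (Or.inr hρ)).const_mul (d j)
  rw [hasGradientAt_iff_hasFDerivAt]
  refine (hsum.rpow_const (p := 2 / ρ) (Or.inl hS.ne')).congr_fderiv ?_
  ext v
  simp only [_root_.smul_apply, _root_.sum_apply, PiLp.proj_apply,
    smul_eq_mul, InnerProductSpace.toDual_apply_apply, PiLp.inner_apply, RCLike.inner_apply,
    conj_trivial, mul_sum]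
  refine sum_congr rfl fun j _ => ?_
  field_simp

theorem hasGradientAt_ces_sq_zero {ρ : ℝ} (hρ : 0 < ρ) (d : ι → ℝ) :
    HasGradientAt (fun y : EuclideanSpace ℝ ι => (∑ j, d j * y j ^ ρ) ^ (2 / ρ)) 0 0 := by
  rw [hasGradientAt_iff_hasFDerivAt, map_zero]
  refine Asymptotics.IsBigO.hasFDerivAt (n := 2) ?_ one_lt_two
  refine Asymptotics.IsBigO.of_bound ((∑ j, |d j|) ^ (2 / ρ))
    (Filter.Eventually.of_forall fun y => ?_)
  have hsum : |∑ j, d j * y j ^ ρ| ≤ (∑ j, |d j|) * ‖y‖ ^ ρ := by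
    rw [sum_mul]
    refine (abs_sum_le_sum_abs _ _).trans (sum_le_sum fun j _ => ?_)
    rw [abs_mul]
    gcongr
    -- at negative `y j` the `rpow` value `y j ^ ρ` is not `|y j| ^ ρ`; only its modulus is bounded
    exact (abs_rpow_le_abs_rpow _ _).trans
      (rpow_le_rpow (abs_nonneg _) (PiLp.norm_apply_le y j) hρ.le)
  simp only [sub_zero, norm_pow, abs_norm, Real.norm_eq_abs]
  calc |(∑ j, d j * y j ^ ρ) ^ (2 / ρ)|
      ≤ |∑ j, d j * y j ^ ρ| ^ (2 / ρ) := abs_rpow_le_abs_rpow _ _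
    _ ≤ ((∑ j, |d j|) * ‖y‖ ^ ρ) ^ (2 / ρ) := by gcongr
    _ = (∑ j, |d j|) ^ (2 / ρ) * ‖y‖ ^ 2 := by
      rw [mul_rpow (by positivity) (by positivity), ← rpow_mul (norm_nonneg y),
        mul_div_cancel₀ _ hρ.ne', rpow_two]

theorem norm_ces_sq_gradient_le {ρ : ℝ} {d : ι → ℝ} (hρ : 1 ≤ ρ) (hd : ∀ j, 0 < d j)
    {x : EuclideanSpace ℝ ι} (hx : ∀ j, 0 ≤ x j) (hS1 : (∑ j, d j * x j ^ ρ) ^ (1 / ρ) ≤ 1) :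
    ‖(WithLp.toLp 2 fun j => 2 * (∑ i, d i * x i ^ ρ) ^ (2 / ρ - 1) * (d j * x j ^ (ρ - 1)) :
      EuclideanSpace ℝ ι)‖ ≤ 2 * (∑ j, d j ^ (2 / ρ)) ^ (1 / 2 : ℝ) := by
  set S := ∑ i, d i * x i ^ ρ
  have hS0 : 0 ≤ S := sum_nonneg fun i _ => mul_nonneg (hd i).le (rpow_nonneg (hx i) ρ)
  have hcoord : ∀ j, (2 * S ^ (2 / ρ - 1) * (d j * x j ^ (ρ - 1))) ^ 2 ≤ 4 * d j ^ (2 / ρ) := by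
    intro j
    have hle := rpow_two_div_sub_one_mul_le_rpow_one_div hρ (hd j) (hx j)
      (single_le_sum (f := fun i => d i * x i ^ ρ)
        (fun i _ => mul_nonneg (hd i).le (rpow_nonneg (hx i) ρ)) (mem_univ j)) hS1
    have hnn : 0 ≤ S ^ (2 / ρ - 1) * (d j * x j ^ (ρ - 1)) :=
      mul_nonneg (rpow_nonneg hS0 _) (mul_nonneg (hd j).le (rpow_nonneg (hx j) _))
    calc (2 * S ^ (2 / ρ - 1) * (d j * x j ^ (ρ - 1))) ^ 2
        ≤ (2 * d j ^ (1 / ρ)) ^ 2 := by rw [mul_assoc]; gcongr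
      _ = 4 * d j ^ (2 / ρ) := by
        rw [mul_pow, ← rpow_mul_natCast (hd j).le]; norm_num; ring_nf
  rw [EuclideanSpace.norm_eq, ← sqrt_eq_rpow]
  calc √(∑ j, ‖2 * S ^ (2 / ρ - 1) * (d j * x j ^ (ρ - 1))‖ ^ 2)
      ≤ √(∑ j, 4 * d j ^ (2 / ρ)) := by
        gcongr with j
        rw [Real.norm_eq_abs, sq_abs]
        exact hcoord j
    _ = 2 * √(∑ j, d j ^ (2 / ρ)) := by
        rw [← mul_sum, sqrt_mul (by norm_num), show (4 : ℝ) = 2 ^ 2 by norm_num,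
          sqrt_sq two_pos.le]

end Orthant

theorem squared_ces_strongly_convex_general
    (m : ℕ) (ρ : ℝ) (hρ1 : 1 < ρ) (hρ2 : ρ ≤ 2)
    (d : Fin m → ℝ) (hd : ∀ j, 0 < d j) :
    StrongConvexOn
      {x : EuclideanSpace ℝ (Fin m) | (∀ j, 0 ≤ x j) ∧ ∀ j, x j ≤ (⨅ j', d j') ^ (-(1/ρ))}
      (2 * (ρ - 1) * (⨅ j, d j) ^ ((2:ℝ)/ρ))
      (fun x : EuclideanSpace ℝ (Fin m) => (∑ j, d j * (x j) ^ ρ) ^ ((2:ℝ)/ρ)) ∧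
    ∀ x : EuclideanSpace ℝ (Fin m), (∀ j, 0 ≤ x j) →
      (∑ j, d j * (x j) ^ ρ) ^ (1/ρ) ≤ 1 →
      ‖gradient (fun y : EuclideanSpace ℝ (Fin m) =>
          (∑ j, d j * (y j) ^ ρ) ^ ((2:ℝ)/ρ)) x‖
        ≤ 2 * (∑ j, (d j) ^ ((2:ℝ)/ρ)) ^ ((1:ℝ)/2) := by
  have hc0 : 0 ≤ ⨅ j, d j := Real.iInf_nonneg fun j => (hd j).le
  have hc : ∀ j, ⨅ j', d j' ≤ d j := ciInf_le (Set.finite_range d).bddBelow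
  refine ⟨(strongConvexOn_ces_sq hρ1.le hρ2 hd hc0 hc).subset (fun x hx => hx.1)
    ((convex_Icc 0 fun _ => _).linear_preimage (WithLp.linearEquiv 2 ℝ (Fin m → ℝ)).toLinearMap),
    fun x hx hS1 => ?_⟩
  obtain rfl | hx0 := eq_or_ne x 0
  · rw [(hasGradientAt_ces_sq_zero (by linarith) d).gradient, norm_zero]
    exact mul_nonneg two_pos.le (rpow_nonneg (sum_nonneg fun j _ => rpow_nonneg (hd j).le _) _)
  obtain ⟨j, hj⟩ : ∃ j, x j ≠ 0 := by
    by_contra! h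
    exact hx0 (by ext j; exact h j)
  rw [(hasGradientAt_ces_sq hρ1.le d (sum_mul_rpow_pos hd hx ((hx j).lt_of_ne' hj))).gradient]
  exact norm_ces_sq_gradient_le hρ1.le hd hx hS1

/-- For the CES disutility `d(x) = (Σ_j d_j x_j^ρ)^{1/ρ}` with `d_j > 0`
and `ρ ∈ (1,2]`, the squared disutility `d(x)² = (Σ_j d_j x_j^ρ)^{2/ρ}` is
`μ`-strongly convex on the cube `C = { x ∈ ℝ^m₊ : ‖x‖_∞ ≤ R }` with
`μ = 2(ρ-1)(min_j d_j)^{2/ρ}` and `R = (min_j d_j)^{-1/ρ}`; moreover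
`‖∇(d(x)²)‖ ≤ 2(Σ_j d_j^{2/ρ})^{1/2}` whenever `d(x) ≤ 1`. -/
theorem squared_ces_strongly_convex
    (m : ℕ) (hm : 0 < m) (ρ : ℝ) (hρ1 : 1 < ρ) (hρ2 : ρ ≤ 2)
    (d : Fin m → ℝ) (hd : ∀ j, 0 < d j) :
    StrongConvexOn
      {x : EuclideanSpace ℝ (Fin m) | (∀ j, 0 ≤ x j) ∧ ∀ j, x j ≤ (⨅ j', d j') ^ (-(1/ρ))}
      (2 * (ρ - 1) * (⨅ j, d j) ^ ((2:ℝ)/ρ))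
      (fun x : EuclideanSpace ℝ (Fin m) => (∑ j, d j * (x j) ^ ρ) ^ ((2:ℝ)/ρ)) ∧
    ∀ x : EuclideanSpace ℝ (Fin m), (∀ j, 0 ≤ x j) →
      (∑ j, d j * (x j) ^ ρ) ^ (1/ρ) ≤ 1 →
      ‖gradient (fun y : EuclideanSpace ℝ (Fin m) =>
          (∑ j, d j * (y j) ^ ρ) ^ ((2:ℝ)/ρ)) x‖
        ≤ 2 * (∑ j, (d j) ^ ((2:ℝ)/ρ)) ^ ((1:ℝ)/2) :=
  squared_ces_strongly_convex_general m ρ hρ1 hρ2 d hd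
end

section
/- Suppose for each i ∈ [n], the function d_i°: Δ_B → R is differentiable with L_i-Lipschitz gradient on Δ_B, d_i°(p) ≥ r_i > 0 on Δ_B, and ‖∇d_i°(p)‖ ≤ R_i on Δ_B. Then f(p) = -Σ_j p_j + Σ_i B_i log(d_i°(p)) is L-smooth on Δ_B with L = Σ_i B_i ( L_i/r_i + R_i(L_i‖B‖_1 + R_i)/r_i² ). -/
open Finset Real

/-! Writing `f = ℓ + ∑ᵢ Bᵢ log dᵢ` with `ℓ` linear, the linear part drops out of
`∇f(p₁) - ∇f(p₂)`, so it suffices to show that each `∇ log dᵢ = dᵢ⁻¹ ∇dᵢ` is Lipschitz on `Δ_B`.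
Split `d₁⁻¹ g₁ - d₂⁻¹ g₂ = d₁⁻¹ (g₁ - g₂) + (d₁⁻¹ - d₂⁻¹) g₂`: the first term is at most
`Lᵢ/rᵢ ‖p₁ - p₂‖`, and since `|d₁⁻¹ - d₂⁻¹| ≤ |d₁ - d₂| / rᵢ²` while the mean value inequality on
the convex set `Δ_B` gives `|d₁ - d₂| ≤ Rᵢ ‖p₁ - p₂‖`, the second is at most
`Rᵢ²/rᵢ² ‖p₁ - p₂‖`. The constant `Lᵢ/rᵢ + Rᵢ²/rᵢ²` is at most the one claimed. -/

/-- The price simplex `Δ_B`. -/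
def priceSimplex (m : ℕ) (Bsum : ℝ) : Set (EuclideanSpace ℝ (Fin m)) :=
  {p | (∀ j, 0 ≤ p j) ∧ (∑ j, p j) = Bsum}

theorem convex_priceSimplex (m : ℕ) (Bsum : ℝ) : Convex ℝ (priceSimplex m Bsum) := by
  rintro x ⟨hx_nonneg, hx_sum⟩ y ⟨hy_nonneg, hy_sum⟩ a b ha hb hab
  have happ : ∀ j, (a • x + b • y) j = a * x j + b * y j := fun j => rfl
  refine ⟨fun j => ?_, ?_⟩
  · rw [happ]
    have := hx_nonneg j
    have := hy_nonneg j
    positivity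
  · simp only [happ]
    rw [sum_add_distrib, ← mul_sum, ← mul_sum, hx_sum, hy_sum, ← add_mul, hab, one_mul]

theorem abs_inv_sub_inv_le_of_le {r a b : ℝ} (hr : 0 < r) (ha : r ≤ a) (hb : r ≤ b) :
    |a⁻¹ - b⁻¹| ≤ |a - b| / r ^ 2 := by
  have ha₀ := hr.trans_le ha
  have hb₀ := hr.trans_le hb
  rw [inv_sub_inv ha₀.ne' hb₀.ne', abs_div, abs_of_pos (mul_pos ha₀ hb₀), abs_sub_comm]
  gcongr
  nlinarith

section Gradient

variable {F : Type*} [NormedAddCommGroup F] [InnerProductSpace ℝ F] [CompleteSpace F]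

theorem norm_gradient (f : F → ℝ) (x : F) : ‖gradient f x‖ = ‖fderiv ℝ f x‖ := by
  rw [← toDual_gradient, LinearIsometryEquiv.norm_map]

theorem norm_gradient_sub_gradient (f g : F → ℝ) (x y : F) :
    ‖gradient f x - gradient g y‖ = ‖fderiv ℝ f x - fderiv ℝ g y‖ := by
  rw [← toDual_gradient, ← toDual_gradient, ← map_sub, LinearIsometryEquiv.norm_map]

end Gradient

section LogDerivative

variable {E : Type*} [NormedAddCommGroup E] [NormedSpace ℝ E]

theorem hasFDerivAt_add_sum_mul_log {ι : Type*} [Fintype ι] (ℓ : E →L[ℝ] ℝ) (B : ι → ℝ)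
    (d : ι → E → ℝ) {p : E} (hd : ∀ i, DifferentiableAt ℝ (d i) p) (hd₀ : ∀ i, d i p ≠ 0) :
    HasFDerivAt (fun q => ℓ q + ∑ i, B i * log (d i q))
      (ℓ + ∑ i, B i • (d i p)⁻¹ • fderiv ℝ (d i) p) p :=
  ℓ.hasFDerivAt.add <| HasFDerivAt.fun_sum fun i _ =>
    ((hd i).hasFDerivAt.log (hd₀ i)).const_mul (B i)

theorem norm_inv_smul_fderiv_sub_le {s : Set E} {d : E → ℝ} {L r R : ℝ} {p₁ p₂ : E}
    (hs : Convex ℝ s) (hd : ∀ p ∈ s, DifferentiableAt ℝ d p)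
    (hR : ∀ p ∈ s, ‖fderiv ℝ d p‖ ≤ R) (hp₁ : p₁ ∈ s) (hp₂ : p₂ ∈ s)
    (hL : ‖fderiv ℝ d p₁ - fderiv ℝ d p₂‖ ≤ L * ‖p₁ - p₂‖)
    (hr : 0 < r) (hr₁ : r ≤ d p₁) (hr₂ : r ≤ d p₂) :
    ‖(d p₁)⁻¹ • fderiv ℝ d p₁ - (d p₂)⁻¹ • fderiv ℝ d p₂‖ ≤ (L / r + R ^ 2 / r ^ 2) * ‖p₁ - p₂‖ := by
  set g₁ := fderiv ℝ d p₁
  set g₂ := fderiv ℝ d p₂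
  have hR₀ : 0 ≤ R := (norm_nonneg _).trans (hR p₁ hp₁)
  have hmvt : |d p₁ - d p₂| ≤ R * ‖p₁ - p₂‖ := by
    simpa only [Real.norm_eq_abs] using hs.norm_image_sub_le_of_norm_fderiv_le hd hR hp₂ hp₁
  have hinv : |(d p₁)⁻¹ - (d p₂)⁻¹| ≤ R * ‖p₁ - p₂‖ / r ^ 2 :=
    (abs_inv_sub_inv_le_of_le hr hr₁ hr₂).trans (by gcongr)
  have hinv₁ : |(d p₁)⁻¹| ≤ r⁻¹ := by
    rw [abs_of_pos (inv_pos.mpr (hr.trans_le hr₁))]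
    exact inv_anti₀ hr hr₁
  calc ‖(d p₁)⁻¹ • g₁ - (d p₂)⁻¹ • g₂‖
      = ‖(d p₁)⁻¹ • (g₁ - g₂) + ((d p₁)⁻¹ - (d p₂)⁻¹) • g₂‖ := by
        rw [smul_sub, sub_smul, sub_add_sub_cancel]
    _ ≤ |(d p₁)⁻¹| * ‖g₁ - g₂‖ + |(d p₁)⁻¹ - (d p₂)⁻¹| * ‖g₂‖ := by
        refine (norm_add_le _ _).trans_eq ?_
        rw [norm_smul, norm_smul, Real.norm_eq_abs, Real.norm_eq_abs]
    _ ≤ r⁻¹ * (L * ‖p₁ - p₂‖) + R * ‖p₁ - p₂‖ / r ^ 2 * R := by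
        gcongr
        exact hR p₂ hp₂
    _ = (L / r + R ^ 2 / r ^ 2) * ‖p₁ - p₂‖ := by ring

end LogDerivative

/-- If each gauge dual `d_i°` is differentiable with `L_i`-Lipschitz
gradient on `Δ_B`, lower bounded by `r_i > 0` on `Δ_B`, and has gradient norm at most
`R_i` on `Δ_B`, then `f(p) = -Σ_j p_j + Σ_i B_i log(d_i°(p))` is `L`-smooth on `Δ_B`
with `L = Σ_i B_i ( L_i/r_i + R_i(L_i‖B‖₁ + R_i)/r_i² )`. -/
theorem potential_smoothness
    (n m : ℕ) (B : Fin n → ℝ) (hB : ∀ i, 0 < B i)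
    (dcirc : Fin n → EuclideanSpace ℝ (Fin m) → ℝ)
    (Li ri Ri : Fin n → ℝ)
    (hri : ∀ i, 0 < ri i)
    (hdiff : ∀ i, ∀ p ∈ priceSimplex m (∑ i', B i'), DifferentiableAt ℝ (dcirc i) p)
    (hLip : ∀ i, ∀ p1 ∈ priceSimplex m (∑ i', B i'), ∀ p2 ∈ priceSimplex m (∑ i', B i'),
      ‖gradient (dcirc i) p1 - gradient (dcirc i) p2‖ ≤ Li i * ‖p1 - p2‖)
    (hlb : ∀ i, ∀ p ∈ priceSimplex m (∑ i', B i'), ri i ≤ dcirc i p)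
    (hgb : ∀ i, ∀ p ∈ priceSimplex m (∑ i', B i'), ‖gradient (dcirc i) p‖ ≤ Ri i) :
    ∀ p1 ∈ priceSimplex m (∑ i', B i'), ∀ p2 ∈ priceSimplex m (∑ i', B i'),
      ‖gradient (fun p : EuclideanSpace ℝ (Fin m) =>
          -(∑ j, p j) + ∑ i, B i * Real.log (dcirc i p)) p1 -
        gradient (fun p : EuclideanSpace ℝ (Fin m) =>
          -(∑ j, p j) + ∑ i, B i * Real.log (dcirc i p)) p2‖
      ≤ (∑ i, B i * (Li i / ri i + Ri i * (Li i * (∑ i', B i') + Ri i) / (ri i) ^ 2))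
          * ‖p1 - p2‖ := by
  intro p₁ hp₁ p₂ hp₂
  let ℓ : EuclideanSpace ℝ (Fin m) →L[ℝ] ℝ := -∑ j, EuclideanSpace.proj j
  have hf : (fun p : EuclideanSpace ℝ (Fin m) => -(∑ j, p j) + ∑ i, B i * log (dcirc i p)) =
      fun p => ℓ p + ∑ i, B i * log (dcirc i p) := by
    funext p
    simp [ℓ]
  have hderiv : ∀ p ∈ priceSimplex m (∑ i', B i'),
      fderiv ℝ (fun p => ℓ p + ∑ i, B i * log (dcirc i p)) p =
        ℓ + ∑ i, B i • (dcirc i p)⁻¹ • fderiv ℝ (dcirc i) p := fun p hp =>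
    (hasFDerivAt_add_sum_mul_log ℓ B dcirc (fun i => hdiff i p hp)
      (fun i => ((hri i).trans_le (hlb i p hp)).ne')).fderiv
  rw [norm_gradient_sub_gradient, hf, hderiv p₁ hp₁, hderiv p₂ hp₂, add_sub_add_left_eq_sub,
    ← sum_sub_distrib, sum_mul]
  refine (norm_sum_le _ _).trans (sum_le_sum fun i _ => ?_)
  have hterm := norm_inv_smul_fderiv_sub_le (convex_priceSimplex m _) (hdiff i)
    (fun p hp => norm_gradient (dcirc i) p ▸ hgb i p hp) hp₁ hp₂
    (norm_gradient_sub_gradient (dcirc i) (dcirc i) p₁ p₂ ▸ hLip i p₁ hp₁ p₂ hp₂)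
    (hri i) (hlb i p₁ hp₁) (hlb i p₂ hp₂)
  have hslack : 0 ≤ Ri i * (∑ i', B i') * (Li i * ‖p₁ - p₂‖) / ri i ^ 2 := by
    have := (norm_nonneg _).trans (hgb i p₁ hp₁)
    have := (norm_nonneg _).trans (hLip i p₁ hp₁ p₂ hp₂)
    have := sum_nonneg fun i' (_ : i' ∈ univ) => (hB i').le
    positivity
  rw [← smul_sub, norm_smul, norm_of_nonneg (hB i).le, mul_assoc]
  refine mul_le_mul_of_nonneg_left ?_ (hB i).le
  linarith [show (Li i / ri i + Ri i * (Li i * (∑ i', B i') + Ri i) / ri i ^ 2) * ‖p₁ - p₂‖ =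
    (Li i / ri i + Ri i ^ 2 / ri i ^ 2) * ‖p₁ - p₂‖ +
      Ri i * (∑ i', B i') * (Li i * ‖p₁ - p₂‖) / ri i ^ 2 by ring]
end

section
/- Let f: R^m → R be locally Lipschitz and admit a chain rule, and let p: R_+ → R^m be an absolutely continuous trajectory of the gradient differential inclusion dp/dt ∈ -∂f(p). If p(0) is not a stationary point (0 ∉ ∂f(p(0))), then there exists T > 0 such that f(p(T)) < sup_{t ∈ [0,T]} f(p(t)) ≤ f(p(0)). -/
/-!
`P` is absolutely continuous and `f` is Lipschitz on the compact set `P '' [0, 1]`, so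
`g = f ∘ P` is absolutely continuous and satisfies the fundamental theorem of calculus. By the
chain rule, `g' = ⟪-v, v⟫ = -‖v‖²` almost everywhere, hence `g t = g 0 - ∫₀ᵗ ‖v‖²` and `g` is
maximal on `[0, 1]` at `0`. If `∫₀¹ ‖v‖²` vanished, `v` would vanish a.e., `P` would stay at
`P 0`, and the inclusion would put `0` in `D (P 0)`; so `g 1 < g 0 = sup g([0, 1])`.
-/

open MeasureTheory RealInnerProductSpace
open Set Filter Topology

namespace AbsolutelyContinuousOnInterval

theorem of_dist_le_mul {X Y : Type*} [PseudoMetricSpace X] [PseudoMetricSpace Y]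
    {f : ℝ → X} {g : ℝ → Y} {a b : ℝ} (K : ℝ)
    (hg : AbsolutelyContinuousOnInterval g a b)
    (hfg : ∀ x ∈ uIcc a b, ∀ y ∈ uIcc a b, dist (f x) (f y) ≤ K * dist (g x) (g y)) :
    AbsolutelyContinuousOnInterval f a b := by
  have hbound : Tendsto (fun E : ℕ × (ℕ → ℝ × ℝ) ↦
      K * ∑ i ∈ Finset.range E.1, dist (g (E.2 i).1) (g (E.2 i).2))
      (totalLengthFilter ⊓ 𝓟 (disjWithin a b)) (𝓝 0) := by
    simpa using Tendsto.const_mul K hg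
  refine squeeze_zero' (Eventually.of_forall fun E ↦ Finset.sum_nonneg fun _ _ ↦ dist_nonneg)
    ?_ hbound
  filter_upwards [mem_inf_of_right (mem_principal_self _)] with E hE
  rw [Finset.mul_sum]
  exact Finset.sum_le_sum fun i hi ↦ hfg _ (hE.1 i hi).1 _ (hE.1 i hi).2

end AbsolutelyContinuousOnInterval

theorem LipschitzOnWith.comp_absolutelyContinuousOnInterval {X Y : Type*}
    [PseudoMetricSpace X] [PseudoMetricSpace Y] {f : X → Y} {g : ℝ → X} {K : NNReal}
    {a b : ℝ} (hf : LipschitzOnWith K f (g '' uIcc a b))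
    (hg : AbsolutelyContinuousOnInterval g a b) :
    AbsolutelyContinuousOnInterval (f ∘ g) a b :=
  hg.of_dist_le_mul K fun _ hx _ hy ↦ hf.dist_le_mul _ (mem_image_of_mem g hx) _
    (mem_image_of_mem g hy)

theorem LocallyLipschitz.comp_absolutelyContinuousOnInterval {X Y : Type*}
    [SeminormedAddCommGroup X] [PseudoMetricSpace Y] {f : X → Y} {g : ℝ → X} {a b : ℝ}
    (hf : LocallyLipschitz f) (hg : AbsolutelyContinuousOnInterval g a b) :
    AbsolutelyContinuousOnInterval (f ∘ g) a b := by
  have hcpt : IsCompact (g '' uIcc a b) := isCompact_uIcc.image_of_continuousOn hg.continuousOn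
  obtain ⟨K, hK⟩ := LocallyLipschitzOn.exists_lipschitzOnWith_of_compact hcpt
    (hf.locallyLipschitzOn (s := g '' uIcc a b))
  exact hK.comp_absolutelyContinuousOnInterval hg

theorem IntervalIntegrable.absolutelyContinuousOnInterval_intervalIntegral_normed
    {E : Type*} [NormedAddCommGroup E] [NormedSpace ℝ E] {f : ℝ → E} {a b c : ℝ}
    (hf : IntervalIntegrable f volume a b) (hc : c ∈ uIcc a b) :
    AbsolutelyContinuousOnInterval (fun x ↦ ∫ s in c..x, f s) a b := by
  refine (hf.norm.absolutelyContinuousOnInterval_intervalIntegral hc).of_dist_le_mul 1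
    fun x hx y hy ↦ ?_
  have hint : ∀ z ∈ uIcc a b, IntervalIntegrable f volume c z := fun z hz ↦
    hf.mono_set (uIcc_subset_uIcc hc hz)
  have hint' : ∀ z ∈ uIcc a b, IntervalIntegrable (‖f ·‖) volume c z := fun z hz ↦
    (hint z hz).norm
  rw [dist_eq_norm, Real.dist_eq, one_mul,
    intervalIntegral.integral_interval_sub_left (hint x hx) (hint y hy),
    intervalIntegral.integral_interval_sub_left (hint' x hx) (hint' y hy)]
  exact intervalIntegral.norm_integral_le_abs_integral_norm

theorem AbsolutelyContinuousOnInterval.integral_eq_sub_of_ae_hasDerivAt {f f' : ℝ → ℝ}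
    {a b : ℝ} (hf : AbsolutelyContinuousOnInterval f a b)
    (hf' : ∀ᵐ x, x ∈ uIoc a b → HasDerivAt f (f' x) x) :
    IntervalIntegrable f' volume a b ∧ ∫ x in a..b, f' x = f b - f a := by
  have hderiv : ∀ᵐ x, x ∈ uIoc a b → deriv f x = f' x := by
    filter_upwards [hf'] with x hx hmem using (hx hmem).deriv
  refine ⟨hf.intervalIntegrable_deriv.congr_ae ?_, ?_⟩
  · exact (ae_restrict_iff' measurableSet_uIoc).2 hderiv
  · rw [← hf.integral_deriv_eq_sub]
    exact intervalIntegral.integral_congr_ae (hderiv.mono fun x hx hmem ↦ (hx hmem).symm)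

theorem absolutelyContinuousOnInterval_of_eq_add_intervalIntegral {E : Type*}
    [NormedAddCommGroup E] [NormedSpace ℝ E] {P v : ℝ → E} {a b : ℝ}
    (hv : IntervalIntegrable v volume a b)
    (hP : ∀ t ∈ uIcc a b, P t = P a + ∫ s in a..t, v s) :
    AbsolutelyContinuousOnInterval P a b :=
  (hv.absolutelyContinuousOnInterval_intervalIntegral_normed left_mem_uIcc).of_dist_le_mul 1
    fun x hx y hy ↦ by rw [hP x hx, hP y hy, dist_add_left, one_mul]

theorem LocallyLipschitz.integral_eq_sub_of_ae_hasDerivAt_comp {E : Type*}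
    [NormedAddCommGroup E] [NormedSpace ℝ E] {f : E → ℝ} {P v : ℝ → E} {g' : ℝ → ℝ} {a b : ℝ}
    (hf : LocallyLipschitz f) (hv : IntervalIntegrable v volume a b)
    (hP : ∀ t ∈ uIcc a b, P t = P a + ∫ s in a..t, v s)
    (hg' : ∀ᵐ t, t ∈ uIoc a b → HasDerivAt (fun s ↦ f (P s)) (g' t) t) :
    IntervalIntegrable g' volume a b ∧ ∫ t in a..b, g' t = f (P b) - f (P a) := by
  have hPac := absolutelyContinuousOnInterval_of_eq_add_intervalIntegral hv hP
  exact (hf.comp_absolutelyContinuousOnInterval hPac).integral_eq_sub_of_ae_hasDerivAt hg'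

theorem integral_norm_sq_pos_of_zero_notMem {E : Type*} [NormedAddCommGroup E]
    [NormedSpace ℝ E] {D : E → Set E} {P v : ℝ → E} {T : ℝ} (hT : 0 < T)
    (hv : IntervalIntegrable (fun t ↦ ‖v t‖ ^ 2) volume 0 T)
    (hP : ∀ t ∈ Icc 0 T, P t = P 0 + ∫ s in 0..t, v s)
    (hincl : ∀ᵐ t ∂volume.restrict (Ioc 0 T), -v t ∈ D (P t)) (hP0 : 0 ∉ D (P 0)) :
    0 < ∫ t in 0..T, ‖v t‖ ^ 2 := by
  by_contra hle
  have hzero : ∫ t in 0..T, ‖v t‖ ^ 2 = 0 :=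
    le_antisymm (not_lt.1 hle) (intervalIntegral.integral_nonneg hT.le fun _ _ ↦ by positivity)
  rw [intervalIntegral.integral_eq_zero_iff_of_le_of_nonneg_ae hT.le
    (Eventually.of_forall fun _ ↦ by positivity) hv] at hzero
  have hv0 : ∀ᵐ t ∂volume.restrict (Ioc 0 T), v t = 0 := by
    filter_upwards [hzero] with t ht
    simpa using ht
  have hrest : ∀ t ∈ Icc 0 T, P t = P 0 := by
    intro t ht
    rw [hP t ht, add_eq_left, intervalIntegral.integral_of_le ht.1]
    exact integral_eq_zero_of_ae (ae_restrict_of_ae_restrict_of_subset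
      (Ioc_subset_Ioc_right ht.2) hv0)
  have : (ae (volume.restrict (Ioc 0 T))).NeBot := by
    rw [ae_neBot, Ne, Measure.restrict_eq_zero, Real.volume_Ioc]
    simpa using hT
  obtain ⟨t, ht, hvt, hDt⟩ := ((ae_restrict_mem measurableSet_Ioc).and (hv0.and hincl)).exists
  rw [hvt, neg_zero, hrest t (Ioc_subset_Icc_self ht)] at hDt
  exact hP0 hDt

/-- Let `f : ℝ^m → ℝ` be locally Lipschitz and admit a chain rule with
respect to its (Clarke) subdifferential `D`, and let `P` be an absolutely continuous
trajectory of the gradient differential inclusion `dP/dt ∈ -D(P)`.  If `P(0)` is not a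
stationary point (`0 ∉ D(P(0))`), then there exists `T > 0` with
`f(P(T)) < sup_{t ∈ [0,T]} f(P(t)) ≤ f(P(0))`. -/
theorem descent_along_subgradient_trajectory
    (m : ℕ) (f : EuclideanSpace ℝ (Fin m) → ℝ)
    (D : EuclideanSpace ℝ (Fin m) → Set (EuclideanSpace ℝ (Fin m)))
    (hLip : LocallyLipschitz f)
    -- `f` admits a chain rule: along every absolutely continuous arc `q` with velocity
    -- `w`, for a.e. `t > 0`, `(d/dt) f(q(t)) = ⟪ν, w(t)⟫` for every `ν ∈ D(q(t))`.
    (hchain : ∀ (q w : ℝ → EuclideanSpace ℝ (Fin m)),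
      (∀ t : ℝ, 0 ≤ t → IntervalIntegrable w volume 0 t) →
      (∀ t : ℝ, 0 ≤ t → q t = q 0 + ∫ s in (0:ℝ)..t, w s) →
      ∀ᵐ t ∂(volume.restrict (Set.Ioi (0:ℝ))),
        ∀ ν ∈ D (q t), HasDerivAt (fun s => f (q s)) ⟪ν, w t⟫ t)
    (P v : ℝ → EuclideanSpace ℝ (Fin m))
    (hvint : ∀ t : ℝ, 0 ≤ t → IntervalIntegrable v volume 0 t)
    (habs : ∀ t : ℝ, 0 ≤ t → P t = P 0 + ∫ s in (0:ℝ)..t, v s)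
    (hincl : ∀ᵐ t ∂(volume.restrict (Set.Ioi (0:ℝ))), -(v t) ∈ D (P t))
    (hnonstat : (0 : EuclideanSpace ℝ (Fin m)) ∉ D (P 0)) :
    ∃ T : ℝ, 0 < T ∧
      f (P T) < sSup ((fun t => f (P t)) '' Set.Icc (0:ℝ) T) ∧
      sSup ((fun t => f (P t)) '' Set.Icc (0:ℝ) T) ≤ f (P 0) := by
  set g : ℝ → ℝ := fun t => f (P t)
  have hderiv : ∀ᵐ t, t ∈ Ioi 0 → HasDerivAt g (-‖v t‖ ^ 2) t := by
    rw [← ae_restrict_iff' measurableSet_Ioi]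
    filter_upwards [hchain P v hvint habs, hincl] with t hchain_t hincl_t
    simpa only [inner_neg_left, real_inner_self_eq_norm_sq] using hchain_t _ hincl_t
  have hdissipation : ∀ T, 0 ≤ T →
      IntervalIntegrable (fun t => ‖v t‖ ^ 2) volume 0 T ∧
        g T = g 0 - ∫ t in 0..T, ‖v t‖ ^ 2 := by
    intro T hT
    obtain ⟨hint, hFTC⟩ := hLip.integral_eq_sub_of_ae_hasDerivAt_comp (hvint T hT)
      (fun t ht => habs t (uIcc_of_le hT ▸ ht).1)
      (hderiv.mono fun t ht hmem => ht (uIoc_of_le hT ▸ hmem).1)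
    rw [intervalIntegral.integral_neg] at hFTC
    exact ⟨by simpa [Pi.neg_def] using hint.neg, by linarith⟩
  have hmax : IsGreatest (g '' Icc 0 1) (g 0) := by
    refine ⟨mem_image_of_mem g (left_mem_Icc.2 zero_le_one), forall_mem_image.2 fun t ht => ?_⟩
    rw [(hdissipation t ht.1).2]
    exact sub_le_self _ (intervalIntegral.integral_nonneg ht.1 fun _ _ => by positivity)
  have hpos := integral_norm_sq_pos_of_zero_notMem one_pos (hdissipation 1 zero_le_one).1
    (fun t ht => habs t ht.1) (ae_restrict_of_ae_restrict_of_subset Ioc_subset_Ioi_self hincl)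
    hnonstat
  refine ⟨1, one_pos, ?_, ?_⟩ <;> rw [hmax.csSup_eq]
  · linarith [(hdissipation 1 zero_le_one).2]
end
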